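/- Let p ∈ (0,1) and consider two players who both use the stationary protocol that transmits with probability p in the first slot and in every slot immediately following one of the player's own collisions, and transmits with probability 1 in any slot immediately following a slot in which the player stayed quiet. Then each player's expected latency from the start of the game equals (2 − p) / (2p(1 − p)). -/
import Mathlib


open scoped ENNReal

namespace Contention

/-- An acknowledgment-based protocol: maps a player's personal transmission history
(the list of her own past transmission indicators, oldest slot first) to the
probability of transmitting in the next slot. -/
abbrev Protocol : Type := List Bool → ℝ

/-- A protocol is valid if it always prescribes a probability in `[0,1]`. -/
def ValidProtocol (f : Protocol) : Prop := ∀ h : List Bool, 0 ≤ f h ∧ f h ≤ 1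

/-- A joint transmission history: the list of transmission vectors, oldest slot first. -/
abbrev Hist (n : ℕ) : Type := List (Fin n → Bool)

/-- The personal transmission history of player `i` extracted from a joint history. -/
def personal {n : ℕ} (h : Hist n) (i : Fin n) : List Bool := h.map fun v => v i

/-- Player `i` transmits alone (hence successfully) in the slot with transmission vector `v`. -/
def alone {n : ℕ} (v : Fin n → Bool) (i : Fin n) : Prop :=
  v i = true ∧ ∀ j : Fin n, j ≠ i → v j = false

instance {n : ℕ} (v : Fin n → Bool) (i : Fin n) : Decidable (alone v i) := by
  unfold alone; infer_instance

/-- Player `i` is still pending after joint history `h` (she never transmitted alone). -/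
def pending {n : ℕ} (h : Hist n) (i : Fin n) : Prop := ∀ v ∈ h, ¬ alone v i

instance {n : ℕ} (h : Hist n) (i : Fin n) : Decidable (pending h i) := by
  unfold pending; infer_instance

/-- Probability that the next slot has transmission vector `v`, given joint history `h`:
each pending player transmits independently with the probability her protocol assigns to
her personal history, and players that already succeeded stay quiet. -/
noncomputable def stepProb {n : ℕ} (F : Fin n → Protocol) (h : Hist n) (v : Fin n → Bool) : ℝ :=
  ∏ i : Fin n,
    if pending h i then
      (if v i = true then F i (personal h i) else 1 - F i (personal h i))
    else
      (if v i = true then 0 else 1)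

/-- Probability that, starting after joint history `h`, the next `e.length` slots produce
exactly the extension `e`. -/
noncomputable def contProb {n : ℕ} (F : Fin n → Protocol) (h e : Hist n) : ℝ :=
  ∏ t ∈ Finset.range e.length, stepProb F (h ++ e.take t) (e.getD t fun _ => false)

/-- Probability that the first `h.length` slots produce exactly the joint history `h`. -/
noncomputable def histProb {n : ℕ} (F : Fin n → Protocol) (h : Hist n) : ℝ := contProb F [] h

/-- Conditional probability, given joint history `h`, that player `i` is still pending
after `s` further slots. -/
noncomputable def condPendProb {n : ℕ} (F : Fin n → Protocol) (h : Hist n) (i : Fin n)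
    (s : ℕ) : ℝ :=
  ∑ e : Fin s → Fin n → Bool,
    if pending (h ++ List.ofFn e) i then contProb F h (List.ofFn e) else 0

/-- Conditional expected latency `E[Tᵢ | h]` of player `i` given joint history `h`
(`Tᵢ` is the first slot in which `i` transmits alone), computed via
`E[Tᵢ | h] = ∑_{s ≥ 0} Pr(Tᵢ > s | h)`; for `s ≤ h.length` the event `Tᵢ > s` is
determined by `h`, and for larger `s` its probability is `condPendProb`. -/
noncomputable def condLatency {n : ℕ} (F : Fin n → Protocol) (h : Hist n) (i : Fin n) : ℝ≥0∞ :=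
  ∑' s : ℕ,
    if s ≤ h.length then (if pending (h.take s) i then 1 else 0)
    else ENNReal.ofReal (condPendProb F h i (s - h.length))

/-- Conditional expected number of further slots until player `i` succeeds, given joint
history `h` (the slot of the successful transmission itself is counted). -/
noncomputable def condRemaining {n : ℕ} (F : Fin n → Protocol) (h : Hist n) (i : Fin n) : ℝ≥0∞ :=
  ∑' s : ℕ, ENNReal.ofReal (condPendProb F h i s)

/-- A profile of protocols is in equilibrium if after no joint history (arising with
positive probability) can a player strictly decrease her conditional expected latency
by unilaterally switching to another (valid) protocol. -/
def IsEquilibrium {n : ℕ} (F : Fin n → Protocol) : Prop :=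
  ∀ i : Fin n, ∀ h : Hist n, 0 < histProb F h →
    ∀ g : Protocol, ValidProtocol g →
      condLatency F h i ≤ condLatency (Function.update F i g) h i

end Contention

namespace Contention

/-- The two-player stationary protocol with parameter `p`: transmit with probability `p`
in the first slot and in each slot immediately following one of the player's own
(necessarily colliding) transmissions, and with probability `1` in any slot immediately
following a quiet slot of the player. -/
noncomputable def pProtocol (p : ℝ) : Protocol := fun h =>
  match h.getLast? with
  | none => p
  | some true => p
  | some false => 1



variable {n : ℕ}

lemma pending_nil' (i : Fin n) : pending ([] : Hist n) i := by
  intro v hv; simp at hv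

lemma pending_of_pending_append {h e : Hist n} {i : Fin n} (hp : pending (h ++ e) i) :
    pending h i := fun v hv => hp v (List.mem_append_left _ hv)

lemma pending_append_singleton {h : Hist n} {v : Fin n → Bool} {i : Fin n} :
    pending (h ++ [v]) i ↔ pending h i ∧ ¬ alone v i := by
  constructor
  · intro hp
    exact ⟨pending_of_pending_append hp, hp v (by simp)⟩
  · rintro ⟨h1, h2⟩ w hw
    rcases List.mem_append.1 hw with hw | hw
    · exact h1 w hw
    · rw [List.mem_singleton.1 hw]; exact h2

lemma contProb_nil' (F : Fin n → Protocol) (h : Hist n) : contProb F h [] = 1 := by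
  simp [contProb]

lemma contProb_cons (F : Fin n → Protocol) (h : Hist n) (v : Fin n → Bool) (l : Hist n) :
    contProb F h (v :: l) = stepProb F h v * contProb F (h ++ [v]) l := by
  unfold contProb
  rw [List.length_cons, Finset.prod_range_succ', mul_comm]
  refine congrArg₂ (· * ·) ?_ (Finset.prod_congr rfl fun t _ => ?_)
  · rw [List.take_zero, List.append_nil]; rfl
  · rw [List.take_succ_cons, List.getD_cons_succ, List.append_cons]

lemma condPendProb_zero (F : Fin n → Protocol) (h : Hist n) (i : Fin n) :
    condPendProb F h i 0 = if pending h i then 1 else 0 := by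
  unfold condPendProb
  rw [Fintype.sum_unique]
  simp [contProb]

lemma condPendProb_succ (F : Fin n → Protocol) (h : Hist n) (i : Fin n) (s : ℕ) :
    condPendProb F h i (s + 1)
      = ∑ v : Fin n → Bool, stepProb F h v * condPendProb F (h ++ [v]) i s := by
  unfold condPendProb
  rw [← Equiv.sum_comp (Fin.consEquiv fun _ : Fin (s + 1) => (Fin n → Bool))]
  rw [Fintype.sum_prod_type]
  refine Finset.sum_congr rfl fun v _ => ?_
  rw [Finset.mul_sum]
  refine Finset.sum_congr rfl fun e _ => ?_
  have hofn : List.ofFn ((Fin.consEquiv fun _ : Fin (s + 1) => (Fin n → Bool)) (v, e))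
      = v :: List.ofFn e := by
    simp [Fin.consEquiv, List.ofFn_succ]
  rw [hofn, contProb_cons, ← List.append_cons]
  by_cases hp : pending (h ++ v :: List.ofFn e) i <;> simp [hp]

lemma condPendProb_of_not_pending (F : Fin n → Protocol) (h : Hist n) (i : Fin n)
    (hh : ¬ pending h i) (s : ℕ) : condPendProb F h i s = 0 := by
  unfold condPendProb
  refine Finset.sum_eq_zero fun e _ => ?_
  rw [if_neg fun hp => hh (pending_of_pending_append hp)]

lemma fin2_eq_or (i j : Fin 2) (hij : j ≠ i) (k : Fin 2) : k = i ∨ k = j := by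
  revert hij; revert i j k; decide

lemma prod_fin2 (i j : Fin 2) (hij : j ≠ i) (f : Fin 2 → ℝ) : ∏ k, f k = f i * f j := by
  fin_cases i <;> fin_cases j <;> simp_all [Fin.prod_univ_two, mul_comm]

lemma sum_fin2_bool (i : Fin 2) (g : (Fin 2 → Bool) → ℝ) :
    ∑ v : Fin 2 → Bool, g v
      = ∑ x : Bool × Bool, g (fun k => if k = i then x.1 else x.2) := by
  obtain ⟨j, hij⟩ := exists_ne i
  refine (Fintype.sum_bijective
    (fun x : Bool × Bool => (fun k => if k = i then x.1 else x.2 : Fin 2 → Bool))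
    ?_ _ _ fun x => rfl).symm
  rw [Fintype.bijective_iff_injective_and_card]
  constructor
  · intro x y hxy
    have h1 := congrFun hxy i
    have h2 := congrFun hxy j
    simp [hij] at h1 h2
    exact Prod.ext h1 h2
  · simp

lemma pProtocol_concat (p : ℝ) (l : List Bool) (b : Bool) :
    pProtocol p (l ++ [b]) = if b then p else 1 := by
  unfold pProtocol
  rw [List.getLast?_concat]
  cases b <;> rfl

lemma personal_append_singleton (h : Hist n) (v : Fin n → Bool) (i : Fin n) :
    personal (h ++ [v]) i = personal h i ++ [v i] := by
  simp [personal]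

lemma alone_iff_two {v : Fin 2 → Bool} {i j : Fin 2} (hij : j ≠ i) :
    alone v i ↔ (v i = true ∧ v j = false) := by
  constructor
  · rintro ⟨h1, h2⟩; exact ⟨h1, h2 j hij⟩
  · rintro ⟨h1, h2⟩
    refine ⟨h1, fun k hk => ?_⟩
    rcases fin2_eq_or i j hij k with rfl | rfl
    · exact absurd rfl hk
    · exact h2

lemma stepProb_eq (F : Fin 2 → Protocol) (h : Hist 2) (v : Fin 2 → Bool) {i j : Fin 2}
    (hij : j ≠ i) :
    stepProb F h v =
      (if pending h i then
          (if v i = true then F i (personal h i) else 1 - F i (personal h i))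
        else if v i = true then 0 else 1) *
      (if pending h j then
          (if v j = true then F j (personal h j) else 1 - F j (personal h j))
        else if v j = true then 0 else 1) := prod_fin2 i j hij _

/-- First component: survival probability of player `i` from the all-mode-`p` state;
second component: from the both-just-quiet state. -/
noncomputable def qf (p : ℝ) : ℕ → ℝ × ℝ
  | 0 => (1, 1)
  | s + 1 => (p ^ 2 * (qf p s).1 + (1 - p) ^ 2 * (qf p s).2
      + p * (1 - p) * (if s = 0 then 1 else 0), (qf p s).1)

lemma condPendProb_states (p : ℝ) (i j : Fin 2) (hij : j ≠ i) :
    ∀ s : ℕ, ∀ h : Hist 2, pending h i →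
      ((pending h j → pProtocol p (personal h i) = p → pProtocol p (personal h j) = p →
        condPendProb (fun _ => pProtocol p) h i s = (qf p s).1) ∧
      (pending h j → pProtocol p (personal h i) = 1 → pProtocol p (personal h j) = 1 →
        condPendProb (fun _ => pProtocol p) h i s = (qf p s).2) ∧
      (¬ pending h j → pProtocol p (personal h i) = 1 →
        condPendProb (fun _ => pProtocol p) h i s = if s = 0 then 1 else 0)) := by
  intro s
  induction s with
  | zero =>
      intro h hi
      refine ⟨fun _ _ _ => ?_, fun _ _ _ => ?_, fun _ _ => ?_⟩ <;>
        simp [condPendProb_zero, hi, qf]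
  | succ s ih =>
      intro h hi
      have hji : i ≠ j := fun he => hij he.symm
      -- notation for the four successor histories
      set F : Fin 2 → Protocol := fun _ => pProtocol p with hF
      have hstep := condPendProb_succ F h i s
      rw [sum_fin2_bool i] at hstep
      have hvi : ∀ b c : Bool, (fun k => if k = i then b else c : Fin 2 → Bool) i = b :=
        fun b c => if_pos rfl
      have hvj : ∀ b c : Bool, (fun k => if k = i then b else c : Fin 2 → Bool) j = c :=
        fun b c => if_neg hij
      -- aloneness facts
      have haloneI : ∀ b c : Bool,
          alone (fun k => if k = i then b else c : Fin 2 → Bool) i ↔ (b = true ∧ c = false) := by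
        intro b c; rw [alone_iff_two hij]; simp [hij]
      have haloneJ : ∀ b c : Bool,
          alone (fun k => if k = i then b else c : Fin 2 → Bool) j ↔ (c = true ∧ b = false) := by
        intro b c; rw [alone_iff_two hji]; simp [hij]
      -- pending facts for successors
      have hpendI : ∀ b c : Bool,
          pending (h ++ [fun k => if k = i then b else c]) i ↔
            pending h i ∧ ¬ (b = true ∧ c = false) := by
        intro b c; rw [pending_append_singleton, haloneI]
      have hpendJ : ∀ b c : Bool,
          pending (h ++ [fun k => if k = i then b else c]) j ↔
            pending h j ∧ ¬ (c = true ∧ b = false) := by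
        intro b c; rw [pending_append_singleton, haloneJ]
      -- protocol values for successors
      have hvalI : ∀ b c : Bool,
          pProtocol p (personal (h ++ [fun k => if k = i then b else c]) i)
            = if b then p else 1 := by
        intro b c
        rw [personal_append_singleton, pProtocol_concat]
        simp
      have hvalJ : ∀ b c : Bool,
          pProtocol p (personal (h ++ [fun k => if k = i then b else c]) j)
            = if c then p else 1 := by
        intro b c
        rw [personal_append_singleton, pProtocol_concat]
        simp [hij]
      -- value of the (true, false) successor (player i succeeds): always 0
      have hTF : condPendProb F (h ++ [fun k => if k = i then true else false]) i s = 0 := by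
        refine condPendProb_of_not_pending _ _ _ ?_ _
        rw [hpendI]; rintro ⟨-, hcon⟩; exact hcon ⟨rfl, rfl⟩
      refine ⟨?_, ?_, ?_⟩
      · -- state A : both pending, both in mode p
        intro hj hvi' hvj'
        have hTT : condPendProb F (h ++ [fun k => if k = i then true else true]) i s
            = (qf p s).1 := by
          refine (ih _ ((hpendI true true).2 ⟨hi, by simp⟩)).1
            ((hpendJ true true).2 ⟨hj, by simp⟩) ?_ ?_
          · rw [hvalI]; rfl
          · rw [hvalJ]; rfl
        have hFF : condPendProb F (h ++ [fun k => if k = i then false else false]) i s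
            = (qf p s).2 := by
          refine (ih _ ((hpendI false false).2 ⟨hi, by simp⟩)).2.1
            ((hpendJ false false).2 ⟨hj, by simp⟩) ?_ ?_
          · rw [hvalI]; rfl
          · rw [hvalJ]; rfl
        have hFT : condPendProb F (h ++ [fun k => if k = i then false else true]) i s
            = if s = 0 then 1 else 0 := by
          refine (ih _ ((hpendI false true).2 ⟨hi, by simp⟩)).2.2 ?_ ?_
          · rw [hpendJ]; rintro ⟨-, hcon⟩; exact hcon ⟨rfl, rfl⟩
          · rw [hvalI]; rfl
        have hsI : F i (personal h i) = p := hvi'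
        have hsJ : F j (personal h j) = p := hvj'
        rw [hstep, Fintype.sum_prod_type]
        simp only [Fintype.sum_bool]
        rw [stepProb_eq F h _ hij, stepProb_eq F h _ hij, stepProb_eq F h _ hij,
          stepProb_eq F h _ hij]
        rw [hTT, hTF, hFT, hFF]
        simp only [qf]
        simp [hi, hj, hij, hsI, hsJ]
        all_goals split_ifs <;> ring
      · -- state B : both pending, both in mode 1
        intro hj hvi' hvj'
        have hTT : condPendProb F (h ++ [fun k => if k = i then true else true]) i s
            = (qf p s).1 := by
          refine (ih _ ((hpendI true true).2 ⟨hi, by simp⟩)).1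
            ((hpendJ true true).2 ⟨hj, by simp⟩) ?_ ?_
          · rw [hvalI]; rfl
          · rw [hvalJ]; rfl
        have hsI : F i (personal h i) = 1 := hvi'
        have hsJ : F j (personal h j) = 1 := hvj'
        rw [hstep, Fintype.sum_prod_type]
        simp only [Fintype.sum_bool]
        rw [stepProb_eq F h _ hij, stepProb_eq F h _ hij, stepProb_eq F h _ hij,
          stepProb_eq F h _ hij]
        rw [hTT]
        simp only [qf]
        simp [hi, hj, hij, hsI, hsJ]
        all_goals split_ifs <;> ring
      · -- state D : i pending in mode 1, j done
        intro hj hvi'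
        have hsI : F i (personal h i) = 1 := hvi'
        rw [hstep, Fintype.sum_prod_type]
        simp only [Fintype.sum_bool]
        rw [stepProb_eq F h _ hij, stepProb_eq F h _ hij, stepProb_eq F h _ hij,
          stepProb_eq F h _ hij]
        rw [hTF]
        simp [hi, hj, hij, hsI]
        all_goals split_ifs <;> ring

lemma condPendProb_empty (p : ℝ) (i : Fin 2) (s : ℕ) :
    condPendProb (fun _ : Fin 2 => pProtocol p) [] i s = (qf p s).1 := by
  obtain ⟨j, hij⟩ := exists_ne i
  exact (condPendProb_states p i j hij s [] (pending_nil' i)).1 (pending_nil' j) rfl rfl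

lemma qf_nonneg (p : ℝ) (hp0 : 0 ≤ p) (hp1 : p ≤ 1) (s : ℕ) :
    0 ≤ (qf p s).1 ∧ 0 ≤ (qf p s).2 := by
  induction s with
  | zero => norm_num [qf]
  | succ s ih =>
      have A := mul_nonneg (sq_nonneg p) ih.1
      have B := mul_nonneg (sq_nonneg (1 - p)) ih.2
      have C : 0 ≤ p * (1 - p) := mul_nonneg hp0 (by linarith)
      refine ⟨?_, ih.1⟩
      simp only [qf]
      split_ifs <;> nlinarith

lemma qf_rec (p : ℝ) (s : ℕ) :
    (qf p (s + 2)).1 = p ^ 2 * (qf p (s + 1)).1 + (1 - p) ^ 2 * (qf p s).1 := by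
  show (qf p (s + 1 + 1)).1 = _
  simp only [qf]
  simp

lemma qf_one (p : ℝ) : (qf p 1).1 = 1 - p + p ^ 2 := by
  show (qf p (0 + 1)).1 = _
  simp only [qf]
  norm_num
  ring

lemma qf_partial_le (p : ℝ) (hp0 : 0 < p) (hp1 : p < 1) (N : ℕ) :
    ∑ s ∈ Finset.range N, (qf p s).1 ≤ (2 - p + p ^ 2) / (2 * p * (1 - p)) := by
  have hnn : ∀ s, 0 ≤ (qf p s).1 := fun s => (qf_nonneg p hp0.le hp1.le s).1
  set q : ℕ → ℝ := fun s => (qf p s).1 with hq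
  have hmono : ∀ M K : ℕ, M ≤ K →
      ∑ s ∈ Finset.range M, q s ≤ ∑ s ∈ Finset.range K, q s := fun M K hMK =>
    Finset.sum_le_sum_of_subset_of_nonneg (Finset.range_subset_range.2 hMK) (fun s _ _ => hnn s)
  have hpos : 0 < 2 * p * (1 - p) := by nlinarith
  have key : ∀ K : ℕ, ∑ s ∈ Finset.range (K + 2), q s ≤ (2 - p + p ^ 2) / (2 * p * (1 - p)) := by
    intro K
    set T := ∑ s ∈ Finset.range (K + 2), q s with hT
    have e1 : T = (∑ s ∈ Finset.range K, q (s + 2)) + q 1 + q 0 := by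
      rw [hT, Finset.sum_range_succ' q (K + 1), Finset.sum_range_succ' (fun s => q (s + 1)) K]
    have e2 : ∑ s ∈ Finset.range K, q (s + 2)
        = p ^ 2 * ∑ s ∈ Finset.range K, q (s + 1) + (1 - p) ^ 2 * ∑ s ∈ Finset.range K, q s := by
      rw [Finset.mul_sum, Finset.mul_sum, ← Finset.sum_add_distrib]
      exact Finset.sum_congr rfl fun s _ => qf_rec p s
    have b1 : ∑ s ∈ Finset.range K, q (s + 1) ≤ T := by
      have : ∑ s ∈ Finset.range (K + 1), q s = (∑ s ∈ Finset.range K, q (s + 1)) + q 0 :=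
        Finset.sum_range_succ' q K
      have h0 : (0 : ℝ) ≤ q 0 := hnn 0
      have := hmono (K + 1) (K + 2) (by omega)
      linarith
    have b2 : ∑ s ∈ Finset.range K, q s ≤ T := hmono K (K + 2) (by omega)
    have hq0 : q 0 = 1 := rfl
    have hq1 : q 1 = 1 - p + p ^ 2 := qf_one p
    have hTbound : T * (2 * p * (1 - p)) ≤ 2 - p + p ^ 2 := by
      have hp2 : (0 : ℝ) ≤ p ^ 2 := sq_nonneg p
      have hp3 : (0 : ℝ) ≤ (1 - p) ^ 2 := sq_nonneg (1 - p)
      nlinarith [e1, e2, b1, b2]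
    rw [le_div_iff₀ hpos]
    exact hTbound
  calc ∑ s ∈ Finset.range N, q s ≤ ∑ s ∈ Finset.range (N + 2), q s := hmono N (N + 2) (by omega)
    _ ≤ _ := key N

lemma qf_summable (p : ℝ) (hp0 : 0 < p) (hp1 : p < 1) :
    Summable (fun s => (qf p s).1) :=
  summable_of_sum_range_le (fun s => (qf_nonneg p hp0.le hp1.le s).1) (qf_partial_le p hp0 hp1)

set_option maxHeartbeats 1000000 in
lemma qf_tsum (p : ℝ) (hp0 : 0 < p) (hp1 : p < 1) :
    ∑' s, (qf p s).1 = (2 - p) / (2 * p * (1 - p)) := by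
  have hsum : Summable (fun s => (qf p s).1) := qf_summable p hp0 hp1
  have hsum1 : Summable (fun s => (qf p (s + 1)).1) := (summable_nat_add_iff 1).2 hsum
  have e0 : ∑' s, (qf p s).1 = (qf p 0).1 + ∑' s, (qf p (s + 1)).1 := Summable.tsum_eq_zero_add hsum
  have e1 : ∑' s, (qf p (s + 1)).1 = (qf p (0 + 1)).1 + ∑' s, (qf p (s + 1 + 1)).1 :=
    Summable.tsum_eq_zero_add hsum1
  have e2 : ∑' s, (qf p (s + 1 + 1)).1
      = p ^ 2 * ∑' s, (qf p (s + 1)).1 + (1 - p) ^ 2 * ∑' s, (qf p s).1 := by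
    rw [← tsum_mul_left, ← tsum_mul_left, ← Summable.tsum_add (hsum1.mul_left _) (hsum.mul_left _)]
    exact tsum_congr fun s => qf_rec p s
  have hq0 : (qf p 0).1 = 1 := by simp [qf]
  have hq1 : (qf p (0 + 1)).1 = 1 - p + p ^ 2 := qf_one p
  rw [hq0] at e0
  rw [hq1] at e1
  have hpos : 0 < 2 * p * (1 - p) := by nlinarith
  rw [eq_div_iff (ne_of_gt hpos)]
  linear_combination (1 - p ^ 2) * e0 + e1 + e2

/-- For `p ∈ (0,1)`, when both players use the stationary protocol
`pProtocol p`, each player's expected latency from the start of the game equals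
`(2 − p) / (2p(1 − p))`. -/
theorem two_player_stationary_latency :
    ∀ p : ℝ, 0 < p → p < 1 → ∀ i : Fin 2,
      condLatency (fun _ : Fin 2 => pProtocol p) [] i
        = ENNReal.ofReal ((2 - p) / (2 * p * (1 - p))) := by
  intro p hp0 hp1 i
  have hnn : ∀ s, 0 ≤ (qf p s).1 := fun s => (qf_nonneg p hp0.le hp1.le s).1
  have hsum : Summable (fun s => (qf p s).1) := qf_summable p hp0 hp1
  have hpt : ∀ s : ℕ,
      (if s ≤ ([] : Hist 2).length then (if pending (([] : Hist 2).take s) i then (1 : ℝ≥0∞) else 0)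
        else ENNReal.ofReal (condPendProb (fun _ : Fin 2 => pProtocol p) [] i
          (s - ([] : Hist 2).length)))
      = ENNReal.ofReal ((qf p s).1) := by
    intro s
    cases s with
    | zero =>
        have : (qf p 0).1 = 1 := by simp [qf]
        simp [pending_nil', this]
    | succ s =>
        have h1 : ¬ (s + 1 ≤ ([] : Hist 2).length) := by simp
        rw [if_neg h1]
        congr 1
        have h2 : s + 1 - ([] : Hist 2).length = s + 1 := by simp
        rw [h2, condPendProb_empty]
  unfold condLatency
  rw [tsum_congr hpt, ← ENNReal.ofReal_tsum_of_nonneg hnn hsum, qf_tsum p hp0 hp1]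


end Contention
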